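/- For any nonempty finite set S ⊆ R^d with r points and invertible Gaussian kernel matrix K_SS, the posterior covariance satisfies the symmetric bound |R_{S,σ}(x,y)| ≤ min[(1 + √r ||K_SS^{-1} K_{Sy}||_2) dist(x,S)/(σ√e), (1 + √r ||K_SS^{-1} K_{Sx}||_2) dist(y,S)/(σ√e)]. -/

import Mathlib

open Real Filter Matrix

noncomputable def gauss (σ : ℝ) {d : ℕ} (u v : EuclideanSpace ℝ (Fin d)) : ℝ :=
  Real.exp (-‖u - v‖ ^ 2 / (2 * σ ^ 2))

lemma key_bound (σ : ℝ) (hσ : 0 < σ) (t : ℝ) :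
    Real.exp (-t^2/(2*σ^2)) * (|t|/σ^2) ≤ Real.exp (-(1/2)) / σ := by
  set u := |t|/σ with hu
  have hu0 : 0 ≤ u := by positivity
  have h2 : -t^2/(2*σ^2) = -(u^2/2) := by
    rw [hu, div_pow, sq_abs]; ring
  have h3 : u ≤ Real.exp (u - 1) := by
    have := Real.add_one_le_exp (u - 1); linarith
  have hσ2 : σ ≠ 0 := ne_of_gt hσ
  calc Real.exp (-t^2/(2*σ^2)) * (|t|/σ^2)
      = (u * Real.exp (-(u^2/2))) / σ := by rw [h2, hu]; field_simp
    _ ≤ (Real.exp (u-1) * Real.exp (-(u^2/2))) / σ := by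
        gcongr
    _ = Real.exp (u - 1 + -(u^2/2)) / σ := by rw [← Real.exp_add]
    _ ≤ Real.exp (-(1/2)) / σ := by
        gcongr
        nlinarith [sq_nonneg (u - 1)]

lemma f_lip (σ : ℝ) (hσ : 0 < σ) (a b : ℝ) :
    |Real.exp (-a^2/(2*σ^2)) - Real.exp (-b^2/(2*σ^2))| ≤
      (Real.exp (-(1/2)) / σ) * |a - b| := by
  set f : ℝ → ℝ := fun t => Real.exp (-t^2/(2*σ^2)) with hf
  have hderiv : ∀ t : ℝ, HasDerivAt f (Real.exp (-t^2/(2*σ^2)) * (-(2*t)/(2*σ^2))) t := by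
    intro t
    have h1 : HasDerivAt (fun t : ℝ => -t^2/(2*σ^2)) (-(2*t)/(2*σ^2)) t := by
      have : HasDerivAt (fun t : ℝ => -t^2/(2*σ^2)) (-(↑2 * t^(2-1))/(2*σ^2)) t :=
        ((hasDerivAt_pow 2 t).neg).div_const (2*σ^2)
      convert this using 1
      norm_num
    exact h1.exp
  have hb : ∀ t ∈ (Set.univ : Set ℝ),
      ‖Real.exp (-t^2/(2*σ^2)) * (-(2*t)/(2*σ^2))‖ ≤ Real.exp (-(1/2)) / σ := by
    intro t _
    have h1 : ‖Real.exp (-t^2/(2*σ^2)) * (-(2*t)/(2*σ^2))‖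
        = Real.exp (-t^2/(2*σ^2)) * (|t|/σ^2) := by
      rw [Real.norm_eq_abs, abs_mul, abs_of_pos (Real.exp_pos _), abs_div, abs_neg]
      rw [abs_of_pos (by positivity : (0:ℝ) < 2*σ^2)]
      rw [abs_mul, abs_of_pos (by norm_num : (0:ℝ) < 2)]
      ring
    rw [h1]
    exact key_bound σ hσ t
  have := convex_univ.norm_image_sub_le_of_norm_hasDerivWithin_le
    (f := f) (fun t _ => (hderiv t).hasDerivWithinAt) hb (Set.mem_univ b) (Set.mem_univ a)
  simpa [Real.norm_eq_abs] using this

lemma gauss_lip (σ : ℝ) (hσ : 0 < σ) {d : ℕ} (u a b : EuclideanSpace ℝ (Fin d)) :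
    |gauss σ a u - gauss σ b u| ≤ (Real.exp (-(1/2)) / σ) * dist a b := by
  have h1 := f_lip σ hσ ‖a - u‖ ‖b - u‖
  have h2 : |‖a - u‖ - ‖b - u‖| ≤ dist a b := by
    rw [dist_eq_norm]
    exact abs_norm_sub_norm_le _ _ |>.trans (by rw [show a - u - (b - u) = a - b by abel])
  unfold gauss
  calc |Real.exp (-‖a-u‖^2/(2*σ^2)) - Real.exp (-‖b-u‖^2/(2*σ^2))|
      ≤ (Real.exp (-(1/2)) / σ) * |‖a - u‖ - ‖b - u‖| := h1
    _ ≤ (Real.exp (-(1/2)) / σ) * dist a b := mul_le_mul_of_nonneg_left h2 (by positivity)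

noncomputable def kmat (σ : ℝ) {d r : ℕ} (s : Fin r → EuclideanSpace ℝ (Fin d)) :
    Matrix (Fin r) (Fin r) ℝ :=
  Matrix.of fun i j => gauss σ (s i) (s j)

noncomputable def kvec (σ : ℝ) {d r : ℕ} (s : Fin r → EuclideanSpace ℝ (Fin d))
    (y : EuclideanSpace ℝ (Fin d)) : Fin r → ℝ :=
  fun i => gauss σ (s i) y

noncomputable def postCov (σ : ℝ) {d r : ℕ} (s : Fin r → EuclideanSpace ℝ (Fin d))
    (x y : EuclideanSpace ℝ (Fin d)) : ℝ :=
  gauss σ x y - dotProduct (kvec σ s x) ((kmat σ s)⁻¹ *ᵥ (kvec σ s y))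

noncomputable def e2norm {r : ℕ} (w : Fin r → ℝ) : ℝ := Real.sqrt (∑ i, (w i) ^ 2)

lemma gauss_symm (σ : ℝ) {d : ℕ} (u v : EuclideanSpace ℝ (Fin d)) :
    gauss σ u v = gauss σ v u := by unfold gauss; rw [norm_sub_rev]

lemma kmat_symm (σ : ℝ) {d r : ℕ} (s : Fin r → EuclideanSpace ℝ (Fin d)) :
    (kmat σ s)ᵀ = kmat σ s := by
  ext i j; simp [kmat, transpose_apply, gauss_symm]

lemma postCov_symm (σ : ℝ) {d r : ℕ} (s : Fin r → EuclideanSpace ℝ (Fin d))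
    (x y : EuclideanSpace ℝ (Fin d)) : postCov σ s x y = postCov σ s y x := by
  unfold postCov
  rw [gauss_symm]
  congr 1
  rw [Matrix.dotProduct_mulVec, ← Matrix.mulVec_transpose, Matrix.transpose_nonsing_inv,
    kmat_symm, dotProduct_comm]

lemma sum_abs_le (r : ℕ) (w : Fin r → ℝ) : ∑ i, |w i| ≤ Real.sqrt r * e2norm w := by
  have h1 : (∑ i, |w i|)^2 ≤ (r : ℝ) * ∑ i, (w i)^2 := by
    have := sq_sum_le_card_mul_sum_sq (s := (Finset.univ : Finset (Fin r))) (f := fun i => |w i|)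
    simpa [sq_abs] using this
  have h2 : ∑ i, |w i| = Real.sqrt ((∑ i, |w i|)^2) :=
    (Real.sqrt_sq (Finset.sum_nonneg fun i _ => abs_nonneg _)).symm
  rw [h2, e2norm, ← Real.sqrt_mul (Nat.cast_nonneg r)]
  exact Real.sqrt_le_sqrt h1

lemma bound_one {d r : ℕ} (σ : ℝ) (hσ : 0 < σ) (hr : 0 < r)
    (s : Fin r → EuclideanSpace ℝ (Fin d)) (hK : IsUnit (kmat σ s).det)
    (x y : EuclideanSpace ℝ (Fin d)) :
    |postCov σ s x y| ≤
      (1 + Real.sqrt r * e2norm ((kmat σ s)⁻¹ *ᵥ kvec σ s y)) *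
        Metric.infDist x (Set.range s) / (σ * Real.sqrt (Real.exp 1)) := by
  haveI : Nonempty (Fin r) := ⟨⟨0, hr⟩⟩
  set w := (kmat σ s)⁻¹ *ᵥ kvec σ s y with hw
  set C := Real.exp (-(1/2)) / σ with hC
  obtain ⟨z, hz, hdz⟩ := (Set.finite_range s).isCompact.exists_infDist_eq_dist
    (Set.range_nonempty s) x
  obtain ⟨i0, rfl⟩ := hz
  set D := Metric.infDist x (Set.range s) with hD
  have hD0 : 0 ≤ D := Metric.infDist_nonneg
  have hKw : kmat σ s *ᵥ w = kvec σ s y := by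
    rw [hw, Matrix.mulVec_mulVec, Matrix.mul_nonsing_inv _ hK, Matrix.one_mulVec]
  have hy0 : gauss σ (s i0) y = ∑ i, gauss σ (s i0) (s i) * w i := by
    have := congrFun hKw i0
    simpa [Matrix.mulVec, dotProduct, kmat, kvec] using this.symm
  have hsplit : postCov σ s x y = (gauss σ x y - gauss σ (s i0) y)
      + ∑ i, (gauss σ (s i0) (s i) - gauss σ x (s i)) * w i := by
    unfold postCov
    rw [dotProduct, hy0]
    have h1 : ∑ i, kvec σ s x i * ((kmat σ s)⁻¹ *ᵥ kvec σ s y) i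
        = ∑ i, gauss σ x (s i) * w i :=
      Finset.sum_congr rfl fun i _ => by rw [kvec, gauss_symm, ← hw]
    have h2 : ∑ i, (gauss σ (s i0) (s i) - gauss σ x (s i)) * w i
        = ∑ i, gauss σ (s i0) (s i) * w i - ∑ i, gauss σ x (s i) * w i := by
      rw [← Finset.sum_sub_distrib]
      exact Finset.sum_congr rfl fun i _ => by ring
    rw [h1, h2]; ring
  have hC0 : 0 ≤ C := by rw [hC]; positivity
  have hsqrtE : Real.sqrt (Real.exp 1) = Real.exp (1/2) := by
    rw [show Real.exp 1 = Real.exp (1/2) * Real.exp (1/2) by rw [← Real.exp_add]; norm_num]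
    exact Real.sqrt_mul_self (Real.exp_pos _).le
  have hCe : C = 1/(σ * Real.sqrt (Real.exp 1)) := by
    rw [hC, hsqrtE, Real.exp_neg]; field_simp
  have hlip : ∀ u, |gauss σ x u - gauss σ (s i0) u| ≤ C * D := by
    intro u
    have h := gauss_lip σ hσ u x (s i0)
    rw [← hC, ← hdz] at h
    exact h
  have hsum : |∑ i, (gauss σ (s i0) (s i) - gauss σ x (s i)) * w i| ≤ C * D * ∑ i, |w i| := by
    calc |∑ i, (gauss σ (s i0) (s i) - gauss σ x (s i)) * w i|
        ≤ ∑ i, |(gauss σ (s i0) (s i) - gauss σ x (s i)) * w i| :=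
          Finset.abs_sum_le_sum_abs _ _
      _ ≤ ∑ i, (C * D) * |w i| := by
          apply Finset.sum_le_sum
          intro i _
          rw [abs_mul]
          apply mul_le_mul_of_nonneg_right _ (abs_nonneg _)
          rw [abs_sub_comm]
          exact hlip (s i)
      _ = C * D * ∑ i, |w i| := by rw [← Finset.mul_sum]
  have hmain : |postCov σ s x y| ≤ C * D * (1 + Real.sqrt r * e2norm w) := by
    calc |postCov σ s x y|
        ≤ |gauss σ x y - gauss σ (s i0) y|
          + |∑ i, (gauss σ (s i0) (s i) - gauss σ x (s i)) * w i| := by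
          rw [hsplit]; exact abs_add_le _ _
      _ ≤ C * D + C * D * ∑ i, |w i| := add_le_add (hlip y) hsum
      _ ≤ C * D + C * D * (Real.sqrt r * e2norm w) := by
          have := mul_le_mul_of_nonneg_left (sum_abs_le r w) (mul_nonneg hC0 hD0)
          linarith
      _ = C * D * (1 + Real.sqrt r * e2norm w) := by ring
  have heq : C * D * (1 + Real.sqrt r * e2norm w)
      = (1 + Real.sqrt r * e2norm w) * D / (σ * Real.sqrt (Real.exp 1)) := by
    rw [hCe]; ring
  exact hmain.trans_eq heq

theorem stmt16 {d r : ℕ} (σ : ℝ) (hσ : 0 < σ) (hr : 0 < r)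
    (s : Fin r → EuclideanSpace ℝ (Fin d)) (hK : IsUnit (kmat σ s).det) :
    ∀ x y : EuclideanSpace ℝ (Fin d),
      |postCov σ s x y| ≤
        min ((1 + Real.sqrt r * e2norm ((kmat σ s)⁻¹ *ᵥ kvec σ s y)) *
              Metric.infDist x (Set.range s) / (σ * Real.sqrt (Real.exp 1)))
            ((1 + Real.sqrt r * e2norm ((kmat σ s)⁻¹ *ᵥ kvec σ s x)) *
              Metric.infDist y (Set.range s) / (σ * Real.sqrt (Real.exp 1))) := by
  intro x y
  refine le_min (bound_one σ hσ hr s hK x y) ?_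
  rw [postCov_symm]
  exact bound_one σ hσ hr s hK y x
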